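/- arXiv:2512.00661 — 5 statements merged into one kernel-verified Lean document; each statement's English description precedes it below -/
import Mathlib

section
/- The matrix Z·μ is symmetric and positive semidefinite, and its kernel consists exactly of the multiples of the all-ones vector U (assuming all S_{ij} > 0 and all m_i > 0). -/
/-!
`Z μ` is the Laplacian of the complete graph weighted by `m i * S i j * m j`. For symmetric
weights `w` the Laplacian quadratic form is `½ ∑ i j, w i j (v i - v j)²`: it is nonnegative,
and when all off-diagonal weights are positive it vanishes only on constant vectors, which the
Laplacian (having zero row sums) does annihilate.
-/

open Finset Matrix

noncomputable def BWC (n : ℕ) (m : Fin n → ℝ) (S : Fin n → Fin n → ℝ) :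
    Matrix (Fin n) (Fin n) ℝ :=
  Matrix.of fun i j => if i = j then ∑ k ∈ Finset.univ.erase i, m k * S i k
    else -(m i * S i j)

namespace Matrix

variable {ι : Type*} {W : Matrix ι ι ℝ}

theorem mul_sub_sq_nonneg_of_offDiag_nonneg (hW : ∀ i j, i ≠ j → 0 ≤ W i j) (v : ι → ℝ)
    (i j : ι) : 0 ≤ W i j * (v i - v j) ^ 2 := by
  by_cases h : i = j
  · simp [h]
  · exact mul_nonneg (hW i j h) (sq_nonneg _)

variable [Fintype ι] [DecidableEq ι]

/-- The diagonal of `W` cancels out, so only the off-diagonal weights matter. -/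
def weightedLaplacian (W : Matrix ι ι ℝ) : Matrix ι ι ℝ :=
  diagonal (W *ᵥ 1) - W

theorem weightedLaplacian_mulVec_one (W : Matrix ι ι ℝ) : weightedLaplacian W *ᵥ 1 = 0 := by
  ext i
  simp [weightedLaplacian, sub_mulVec, mulVec_diagonal]

theorem weightedLaplacian_mulVec_const (W : Matrix ι ι ℝ) (c : ℝ) :
    weightedLaplacian W *ᵥ (fun _ => c) = 0 := by
  have : (fun _ : ι => c) = c • 1 := by ext; simp
  rw [this, mulVec_smul, weightedLaplacian_mulVec_one, smul_zero]

theorem dotProduct_weightedLaplacian_mulVec (hW : W.IsSymm) (v : ι → ℝ) :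
    v ⬝ᵥ W.weightedLaplacian *ᵥ v = (∑ i, ∑ j, W i j * (v i - v j) ^ 2) / 2 := by
  have hswap : ∑ i, ∑ j, W i j * v j ^ 2 = ∑ i, ∑ j, W i j * v i ^ 2 := by
    rw [sum_comm]
    simp only [hW.apply]
  have hform : v ⬝ᵥ W.weightedLaplacian *ᵥ v =
      ∑ i, ∑ j, W i j * v i ^ 2 - ∑ i, ∑ j, W i j * v i * v j := by
    rw [weightedLaplacian, sub_mulVec, dotProduct_sub]
    congr 1
    · simp only [dotProduct, mulVec_diagonal]
      simp only [mulVec, dotProduct, Pi.one_apply, mul_one, mul_sum, sum_mul]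
      refine sum_congr rfl fun i _ => sum_congr rfl fun j _ => by ring
    · simp only [dotProduct, mulVec, mul_sum]
      refine sum_congr rfl fun i _ => sum_congr rfl fun j _ => by ring
  have hexpand : ∑ i, ∑ j, W i j * (v i - v j) ^ 2 = ∑ i, ∑ j, W i j * v i ^ 2
      + ∑ i, ∑ j, W i j * v j ^ 2 - 2 * ∑ i, ∑ j, W i j * v i * v j := by
    simp only [mul_sum, ← sum_add_distrib, ← sum_sub_distrib]
    refine sum_congr rfl fun i _ => sum_congr rfl fun j _ => by ring
  rw [hform, hexpand, hswap]
  ring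

theorem IsSymm.weightedLaplacian (hW : W.IsSymm) : W.weightedLaplacian.IsSymm := by
  simp only [Matrix.weightedLaplacian, IsSymm, transpose_sub, diagonal_transpose, hW.eq]

theorem posSemidef_weightedLaplacian (hW : W.IsSymm) (hW₀ : ∀ i j, i ≠ j → 0 ≤ W i j) :
    W.weightedLaplacian.PosSemidef := by
  refine .of_dotProduct_mulVec_nonneg (isHermitian_iff_isSymm.mpr hW.weightedLaplacian)
    fun v => ?_
  rw [star_trivial, dotProduct_weightedLaplacian_mulVec hW]
  exact div_nonneg (sum_nonneg fun i _ => sum_nonneg fun j _ =>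
    mul_sub_sq_nonneg_of_offDiag_nonneg hW₀ v i j) zero_le_two

theorem weightedLaplacian_mulVec_eq_zero_iff (hW : W.IsSymm) (hW₀ : ∀ i j, i ≠ j → 0 < W i j)
    (v : ι → ℝ) : W.weightedLaplacian *ᵥ v = 0 ↔ ∃ c : ℝ, v = fun _ => c := by
  refine ⟨fun hv => ?_, fun ⟨c, hc⟩ => hc ▸ weightedLaplacian_mulVec_const W c⟩
  have hnonneg := mul_sub_sq_nonneg_of_offDiag_nonneg (fun i j h => (hW₀ i j h).le) v
  have hsum : ∑ i, ∑ j, W i j * (v i - v j) ^ 2 = 0 := by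
    have := dotProduct_weightedLaplacian_mulVec hW v
    rw [hv, dotProduct_zero] at this
    linarith
  have hterm : ∀ i j, W i j * (v i - v j) ^ 2 = 0 := fun i j =>
    (sum_eq_zero_iff_of_nonneg fun j _ => hnonneg i j).mp
      ((sum_eq_zero_iff_of_nonneg fun i _ => sum_nonneg fun j _ => hnonneg i j).mp hsum i
        (mem_univ i)) j (mem_univ j)
  have hconst : ∀ i j, v i = v j := fun i j => by
    by_cases h : i = j
    · rw [h]
    · simpa [sub_eq_zero, (hW₀ i j h).ne'] using hterm i j
  rcases isEmpty_or_nonempty ι with hι | ⟨⟨i₀⟩⟩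
  · exact ⟨0, funext fun i => isEmptyElim i⟩
  · exact ⟨v i₀, funext fun i => hconst i i₀⟩

end Matrix

theorem BWC_mul_diagonal (n : ℕ) (m : Fin n → ℝ) (S : Fin n → Fin n → ℝ) :
    BWC n m S * diagonal m = weightedLaplacian (of fun i j => m i * S i j * m j) := by
  ext i j
  rw [mul_diagonal, weightedLaplacian, Matrix.sub_apply, diagonal_apply, BWC, of_apply, of_apply]
  by_cases h : i = j
  · subst h
    simp only [if_true, mulVec, dotProduct, of_apply, Pi.one_apply, mul_one,
      sum_erase_eq_sub (mem_univ i), sub_mul, sum_mul]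
    congr 1
    exact sum_congr rfl fun k _ => by ring
  · simp only [if_neg h]
    ring

theorem stmt1_general (n : ℕ) (m : Fin n → ℝ) (S : Fin n → Fin n → ℝ)
    (hm : ∀ i, 0 < m i) (hSpos : ∀ i j, i ≠ j → 0 < S i j)
    (hSsymm : ∀ i j, S i j = S j i) :
    (BWC n m S * Matrix.diagonal m).IsSymm ∧
    (BWC n m S * Matrix.diagonal m).PosSemidef ∧
    (∀ v : Fin n → ℝ,
      Matrix.mulVec (BWC n m S * Matrix.diagonal m) v = 0 ↔ ∃ c : ℝ, v = fun _ => c) := by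
  set W : Matrix (Fin n) (Fin n) ℝ := of fun i j => m i * S i j * m j
  have hW : W.IsSymm := by
    ext i j
    simp only [W, transpose_apply, of_apply, hSsymm i j]
    ring
  have hW₀ : ∀ i j, i ≠ j → 0 < W i j := fun i j h => by
    have := hSpos i j h; have := hm i; have := hm j
    simp only [W, of_apply]
    positivity
  rw [BWC_mul_diagonal]
  exact ⟨hW.weightedLaplacian, posSemidef_weightedLaplacian hW fun i j h => (hW₀ i j h).le,
    weightedLaplacian_mulVec_eq_zero_iff hW hW₀⟩

theorem stmt1 (n : ℕ) (hn : 2 ≤ n) (m : Fin n → ℝ) (S : Fin n → Fin n → ℝ)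
    (hm : ∀ i, 0 < m i) (hSpos : ∀ i j, i ≠ j → 0 < S i j)
    (hSsymm : ∀ i j, S i j = S j i) :
    (BWC n m S * Matrix.diagonal m).IsSymm ∧
    (BWC n m S * Matrix.diagonal m).PosSemidef ∧
    (∀ v : Fin n → ℝ,
      Matrix.mulVec (BWC n m S * Matrix.diagonal m) v = 0 ↔ ∃ c : ℝ, v = fun _ => c) :=
  stmt1_general n m S hm hSpos hSsymm
end

section
/- All eigenvalues of the Brehm–Wintner–Conley matrix Z are real and nonnegative, and 0 is an eigenvalue with eigenvector U (acting on the right as U·Z = 0). -/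
/-!
Every column of `Z` sums to zero because `S` is symmetric, so `U·Z = 0`. If `v·Z = c·v`, pairing
this with the weights `m j * conj (v j)` gives `c · Σ m_j |v_j|² = ½ Σ_{i,j} m_i m_j S_ij |v_j - v_i|²`,
a nonnegative Dirichlet form, so `c` is real and nonnegative.
-/

open Finset Matrix

open ComplexConjugate

section DirichletForm

variable {ι : Type*} [Fintype ι]

theorem sum_sum_mul_sub_mul_conj (w : ι → ι → ℝ) (hw : ∀ i j, w i j = w j i) (v : ι → ℂ) :
    ∑ j, ∑ i, (w i j : ℂ) * (v j - v i) * conj (v j) =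
      ((∑ j, ∑ i, w i j * Complex.normSq (v j - v i)) / 2 : ℝ) := by
  -- swapping i and j and averaging turns each term into w i j * |v j - v i|² / 2
  have hswap : ∑ j, ∑ i, (w i j : ℂ) * (v j - v i) * conj (v j) =
      ∑ j, ∑ i, (w i j : ℂ) * (v i - v j) * conj (v i) := by
    rw [sum_comm]
    simp only [hw]
  have hsum : 2 * ∑ j, ∑ i, (w i j : ℂ) * (v j - v i) * conj (v j) =
      ∑ j, ∑ i, (w i j : ℂ) * ((v j - v i) * conj (v j - v i)) := by
    rw [two_mul]
    nth_rewrite 2 [hswap]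
    simp only [← sum_add_distrib, map_sub]
    refine sum_congr rfl fun j _ => sum_congr rfl fun i _ => ?_
    ring
  simp only [Complex.mul_conj] at hsum
  push_cast
  linear_combination hsum / 2

theorem sum_sum_mul_normSq_nonneg (w : ι → ι → ℝ) (hw : ∀ i j, i ≠ j → 0 ≤ w i j) (v : ι → ℂ) :
    0 ≤ ∑ j, ∑ i, w i j * Complex.normSq (v j - v i) := by
  refine sum_nonneg fun j _ => sum_nonneg fun i _ => ?_
  rcases eq_or_ne i j with rfl | hij
  · simp
  · exact mul_nonneg (hw i j hij) (Complex.normSq_nonneg _)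

end DirichletForm

section BWC

variable {n : ℕ} {m : Fin n → ℝ} {S : Fin n → Fin n → ℝ}

theorem vecMul_map_BWC_apply {R : Type*} [CommRing R] (f : ℝ →+* R)
    (hS : ∀ i j, S i j = S j i) (v : Fin n → R) (j : Fin n) :
    vecMul v ((BWC n m S).map f) j = ∑ i, f (m i * S i j) * (v j - v i) := by
  have hoff : ∀ i ∈ univ.erase j, v i * f (BWC n m S i j) = -(f (m i * S i j) * v i) := by
    intro i hi
    rw [BWC, of_apply, if_neg (ne_of_mem_erase hi), map_neg]
    ring
  have hdiag : v j * f (BWC n m S j j) = ∑ i ∈ univ.erase j, f (m i * S i j) * v j := by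
    simp only [BWC, of_apply, if_pos, map_sum, mul_sum, hS j]
    exact sum_congr rfl fun i _ => mul_comm _ _
  simp only [vecMul, dotProduct, map_apply]
  rw [← add_sum_erase _ _ (mem_univ j), hdiag, sum_congr rfl hoff, ← sum_add_distrib,
    ← add_sum_erase _ _ (mem_univ j), sub_self, mul_zero, zero_add]
  exact sum_congr rfl fun i _ => by ring

theorem vecMul_one_BWC (hS : ∀ i j, S i j = S j i) :
    vecMul (fun _ => (1 : ℝ)) (BWC n m S) = 0 := by
  funext j
  simpa using vecMul_map_BWC_apply (m := m) (RingHom.id ℝ) hS (fun _ => 1) j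

theorem exists_nonneg_of_vecMul_BWC_eq_smul (hm : ∀ i, 0 < m i) (hS0 : ∀ i j, i ≠ j → 0 ≤ S i j)
    (hS : ∀ i j, S i j = S j i) {c : ℂ} {v : Fin n → ℂ} (hv : v ≠ 0)
    (hev : vecMul v ((BWC n m S).map (fun x => (x : ℂ))) = c • v) :
    ∃ r : ℝ, 0 ≤ r ∧ c = r := by
  set w : Fin n → Fin n → ℝ := fun i j => m i * m j * S i j
  set M := ∑ j, m j * Complex.normSq (v j)
  set D := ∑ j, ∑ i, w i j * Complex.normSq (v j - v i)
  have hcoord (j : Fin n) : c * v j = ∑ i, (m i * S i j : ℝ) * (v j - v i) := by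
    rw [← smul_eq_mul, ← Pi.smul_apply, ← hev]
    exact vecMul_map_BWC_apply Complex.ofRealHom hS v j
  have hpair : c * M = (D / 2 : ℝ) := by
    rw [← sum_sum_mul_sub_mul_conj w (fun i j => by simp only [w, hS i j]; ring), Complex.ofReal_sum,
      mul_sum]
    refine sum_congr rfl fun j _ => ?_
    rw [Complex.ofReal_mul, ← Complex.mul_conj,
      show c * (m j * (v j * conj (v j))) = c * v j * (m j * conj (v j)) by ring, hcoord, sum_mul]
    refine sum_congr rfl fun i _ => ?_
    push_cast [w]
    ring
  have hM : 0 < M := by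
    obtain ⟨j, hj⟩ := Function.ne_iff.mp hv
    exact sum_pos' (fun i _ => mul_nonneg (hm i).le (Complex.normSq_nonneg _))
      ⟨j, mem_univ j, mul_pos (hm j) (Complex.normSq_pos.mpr hj)⟩
  have hD : 0 ≤ D := sum_sum_mul_normSq_nonneg w
    (fun i j hij => mul_nonneg (mul_pos (hm i) (hm j)).le (hS0 i j hij)) v
  refine ⟨D / 2 / M, by positivity, ?_⟩
  rw [Complex.ofReal_div, eq_div_iff (Complex.ofReal_ne_zero.mpr hM.ne'), hpair]

end BWC

theorem stmt2_general (n : ℕ) (m : Fin n → ℝ) (S : Fin n → Fin n → ℝ)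
    (hm : ∀ i, 0 < m i) (hSpos : ∀ i j, i ≠ j → 0 < S i j)
    (hSsymm : ∀ i j, S i j = S j i) :
    Matrix.vecMul (fun _ => (1 : ℝ)) (BWC n m S) = 0 ∧
    ∀ (c : ℂ) (v : Fin n → ℂ), v ≠ 0 →
      Matrix.vecMul v ((BWC n m S).map (fun x => (x : ℂ))) = c • v →
      ∃ r : ℝ, 0 ≤ r ∧ c = (r : ℂ) :=
  ⟨vecMul_one_BWC hSsymm, fun _ _ hv hev =>
    exists_nonneg_of_vecMul_BWC_eq_smul hm (fun i j hij => (hSpos i j hij).le) hSsymm hv hev⟩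

theorem stmt2 (n : ℕ) (hn : 2 ≤ n) (m : Fin n → ℝ) (S : Fin n → Fin n → ℝ)
    (hm : ∀ i, 0 < m i) (hSpos : ∀ i j, i ≠ j → 0 < S i j)
    (hSsymm : ∀ i j, S i j = S j i) :
    Matrix.vecMul (fun _ => (1 : ℝ)) (BWC n m S) = 0 ∧
    ∀ (c : ℂ) (v : Fin n → ℂ), v ≠ 0 →
      Matrix.vecMul v ((BWC n m S).map (fun x => (x : ℂ))) = c • v →
      ∃ r : ℝ, 0 ≤ r ∧ c = (r : ℂ) :=
  stmt2_general n m S hm hSpos hSsymm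
end

section
/- Let q_1,...,q_5 ∈ ℝ² be five points not all on one line, with coordinates q_i = (x_i, y_i). Let Δ_{hij} = (q_i − q_h) ∧ (q_j − q_h) denote twice the oriented area of triangle q_h q_i q_j. Suppose Φ, Ψ ∈ ℝ^5 are linearly independent covectors satisfying Σ Φ_i = Σ Φ_i x_i = Σ Φ_i y_i = 0 and Σ Ψ_i = Σ Ψ_i x_i = Σ Ψ_i y_i = 0. Then there exists a nonzero real number a such that for every even permutation (1,2,3,4,5) ↦ (h,i,j,k,l), Δ_{hij} = a(Φ_k Ψ_l − Φ_l Ψ_k). -/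
open Finset

/-- The planar wedge product `p ∧ q = pₓ q_y − p_y qₓ`. -/
noncomputable def wedge (p q : ℝ × ℝ) : ℝ := p.1 * q.2 - p.2 * q.1

/-!
Let `C = homCoords q` be the `3 × 5` matrix with rows `U, X, Y` and `F` the `5 × 2` matrix with
columns `Φ, Ψ`, so that `C F = 0`. For an even permutation `σ`, `Δ_σ` is the minor of `C` on the
columns `σ 0, σ 1, σ 2` and `M_σ = Φ_{σ 3} Ψ_{σ 4} − Φ_{σ 4} Ψ_{σ 3}` is the complementary minor
of `F`. The product of `[C; e_{σ 3}; e_{σ 4}]` and `[e_{τ 0}, e_{τ 1}, e_{τ 2} | F]` is block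
triangular because `C F = 0`; computing its determinant in two ways gives
`Δ_σ M_τ = Δ_τ M_σ`. Non-collinearity of the points makes some `Δ_σ` nonzero and independence
of `Φ, Ψ` makes some `M_τ` nonzero, so `a = Δ_τ / M_τ` works.
-/
open Matrix Equiv

theorem Equiv.Perm.exists_sign_eq_one_forall_apply_eq {α : Type*} [Fintype α] [DecidableEq α]
    {n : ℕ} (hn : n + 2 ≤ Nat.card α) (x y : Fin n ↪ α) :
    ∃ σ : Perm α, sign σ = 1 ∧ ∀ i, σ (x i) = y i := by
  have := alternatingGroup.isMultiplyPretransitive α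
  have := MulAction.isMultiplyPretransitive_of_le (G := alternatingGroup α)
    (Nat.le_sub_of_add_le hn) (Nat.sub_le _ _)
  obtain ⟨σ, hσ⟩ := MulAction.exists_smul_eq (alternatingGroup α) x y
  exact ⟨σ, σ.2, fun i => congrArg (· i) hσ⟩

theorem Matrix.det_submatrix_mul_det_submatrix_of_mul_eq_zero {R α β ι : Type*} [CommRing R]
    [Fintype α] [Fintype β] [Fintype ι] [DecidableEq α] [DecidableEq β] [DecidableEq ι]
    {C : Matrix α ι R} {F : Matrix ι β R} (hCF : C * F = 0) (σ τ : α ⊕ β ≃ ι) :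
    (C.submatrix id (τ ∘ Sum.inl)).det * (F.submatrix (σ ∘ Sum.inr) id).det =
      Perm.sign (σ.trans τ.symm) * (C.submatrix id (σ ∘ Sum.inl)).det *
        (F.submatrix (τ ∘ Sum.inr) id).det := by
  set P := fromRows C ((1 : Matrix ι ι R).submatrix (σ ∘ Sum.inr) id)
  set Q := fromCols ((1 : Matrix ι ι R).submatrix id (τ ∘ Sum.inl)) F
  have hP : P.submatrix id σ =
      fromBlocks (C.submatrix id (σ ∘ Sum.inl)) (C.submatrix id (σ ∘ Sum.inr)) 0 1 := by
    ext (i | i) (j | j) <;> simp [P, one_apply]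
  have hQ : Q.submatrix τ id =
      fromBlocks 1 (F.submatrix (τ ∘ Sum.inl) id) 0 (F.submatrix (τ ∘ Sum.inr) id) := by
    ext (i | i) (j | j) <;> simp [Q, one_apply]
  have hQσ : Q.submatrix σ id = (Q.submatrix τ id).submatrix (σ.trans τ.symm) id := by
    rw [submatrix_submatrix, coe_trans, ← Function.comp_assoc, self_comp_symm]; rfl
  calc _ = (P * Q).det := by
        rw [fromRows_mul_fromCols, hCF, det_fromBlocks_zero₁₂]
        congr 2 <;> ext <;> simp [mul_apply, one_apply]
    _ = (P.submatrix id σ * Q.submatrix σ id).det := by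
        rw [submatrix_mul_equiv, submatrix_id_id]
    _ = _ := by
        rw [det_mul, hQσ, det_permute, hP, hQ, det_fromBlocks_zero₂₁, det_fromBlocks_zero₂₁]
        simp only [det_one]
        ring

theorem exists_eq_smul_of_wedge_eq_zero {v w : ℝ × ℝ} (hv : v ≠ 0) (h : wedge v w = 0) :
    ∃ r : ℝ, w = r • v := by
  have hn : v.1 ^ 2 + v.2 ^ 2 ≠ 0 := by
    contrapose! hv
    ext <;> simp only [Prod.fst_zero, Prod.snd_zero] <;> nlinarith [sq_nonneg v.1, sq_nonneg v.2]
  refine ⟨(v.1 * w.1 + v.2 * w.2) / (v.1 ^ 2 + v.2 ^ 2), ?_⟩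
  unfold wedge at h
  ext <;> simp only [Prod.smul_fst, Prod.smul_snd, smul_eq_mul] <;> field_simp
  · linear_combination (-v.2) * h
  · linear_combination v.1 * h

theorem collinear_range_of_forall_wedge_eq_zero {ι : Type*} {q : ι → ℝ × ℝ} (i₀ : ι)
    (h : ∀ j k, wedge (q j - q i₀) (q k - q i₀) = 0) : Collinear ℝ (Set.range q) := by
  rw [collinear_iff_of_mem (Set.mem_range_self i₀)]
  by_cases hconst : ∀ j, q j = q i₀
  · exact ⟨0, by rintro _ ⟨j, rfl⟩; exact ⟨0, by simp [hconst j]⟩⟩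
  push Not at hconst
  obtain ⟨j, hj⟩ := hconst
  refine ⟨q j - q i₀, ?_⟩
  rintro _ ⟨k, rfl⟩
  obtain ⟨r, hr⟩ := exists_eq_smul_of_wedge_eq_zero (sub_ne_zero.mpr hj) (h j k)
  exact ⟨r, by rw [← hr, vadd_eq_add, sub_add_cancel]⟩

def homCoords {ι : Type*} (q : ι → ℝ × ℝ) : Matrix (Fin 3) ι ℝ :=
  of ![fun _ => 1, fun i => (q i).1, fun i => (q i).2]

section

variable {ι : Type*}

theorem homCoords_mulVec_eq_zero [Fintype ι] {q : ι → ℝ × ℝ} {v : ι → ℝ} (h1 : ∑ i, v i = 0)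
    (hx : ∑ i, v i * (q i).1 = 0) (hy : ∑ i, v i * (q i).2 = 0) : homCoords q *ᵥ v = 0 := by
  ext r
  fin_cases r
  · simpa [homCoords, mulVec, dotProduct] using h1
  · simpa [homCoords, mulVec, dotProduct, mul_comm] using hx
  · simpa [homCoords, mulVec, dotProduct, mul_comm] using hy

theorem det_homCoords_submatrix (q : ι → ℝ × ℝ) (f : Fin 3 → ι) :
    ((homCoords q).submatrix id f).det = wedge (q (f 1) - q (f 0)) (q (f 2) - q (f 0)) := by
  simp only [homCoords, det_fin_three, submatrix_apply, id_eq, of_apply, cons_val',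
    cons_val_fin_one, cons_val_zero, cons_val_one, Matrix.cons_val, wedge, Prod.fst_sub,
    Prod.snd_sub]
  ring

theorem det_transpose_pair_submatrix {R : Type*} [CommRing R] (Φ Ψ : ι → R) (g : Fin 2 → ι) :
    ((of ![Φ, Ψ])ᵀ.submatrix g id).det = Φ (g 0) * Ψ (g 1) - Φ (g 1) * Ψ (g 0) := by
  simp [det_fin_two, mul_comm]

end

theorem wedge_mul_eq_wedge_mul_of_sign_eq_one {q : Fin 5 → ℝ × ℝ} {Φ Ψ : Fin 5 → ℝ}
    (hΦ : homCoords q *ᵥ Φ = 0) (hΨ : homCoords q *ᵥ Ψ = 0) {σ τ : Perm (Fin 5)}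
    (hσ : Perm.sign σ = 1) (hτ : Perm.sign τ = 1) :
    wedge (q (σ 1) - q (σ 0)) (q (σ 2) - q (σ 0)) * (Φ (τ 3) * Ψ (τ 4) - Φ (τ 4) * Ψ (τ 3)) =
      wedge (q (τ 1) - q (τ 0)) (q (τ 2) - q (τ 0)) * (Φ (σ 3) * Ψ (σ 4) - Φ (σ 4) * Ψ (σ 3)) := by
  have hCF : homCoords q * (of ![Φ, Ψ])ᵀ = 0 := by
    ext i j
    fin_cases j
    · simpa [mul_apply, mulVec, dotProduct] using congrFun hΦ i
    · simpa [mul_apply, mulVec, dotProduct] using congrFun hΨ i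
  let e : Fin 3 ⊕ Fin 2 ≃ Fin 5 := finSumFinEquiv
  have h := det_submatrix_mul_det_submatrix_of_mul_eq_zero hCF (e.trans τ) (e.trans σ)
  have hsign : Perm.sign ((e.trans τ).trans (e.trans σ).symm) = 1 := by
    rw [show (e.trans τ).trans (e.trans σ).symm = (e.trans (τ.trans σ.symm)).trans e.symm from rfl,
      Perm.sign_trans_trans_symm, Perm.sign_trans, Perm.sign_symm, hσ, hτ, one_mul]
  rw [det_homCoords_submatrix, det_homCoords_submatrix, det_transpose_pair_submatrix,
    det_transpose_pair_submatrix, hsign, Units.val_one, Int.cast_one, one_mul] at h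
  exact h

theorem exists_sign_eq_one_wedge_ne_zero {q : Fin 5 → ℝ × ℝ}
    (hq : ¬ Collinear ℝ (Set.range q)) :
    ∃ σ : Perm (Fin 5), Perm.sign σ = 1 ∧ wedge (q (σ 1) - q (σ 0)) (q (σ 2) - q (σ 0)) ≠ 0 := by
  obtain ⟨j, k, hjk⟩ : ∃ j k, wedge (q j - q 0) (q k - q 0) ≠ 0 := by
    by_contra! h
    exact hq (collinear_range_of_forall_wedge_eq_zero 0 h)
  have hj : j ≠ 0 := by rintro rfl; simp [wedge] at hjk
  have hk : k ≠ 0 := by rintro rfl; simp [wedge] at hjk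
  have hjk' : j ≠ k := by rintro rfl; simp [wedge, mul_comm] at hjk
  have hinj : Function.Injective ![0, j, k] := by
    intro a b hab
    fin_cases a <;> fin_cases b <;> simp_all [eq_comm]
  obtain ⟨σ, hσ, hσx⟩ := Perm.exists_sign_eq_one_forall_apply_eq (by simp)
    ⟨![0, 1, 2], by decide⟩ ⟨![0, j, k], hinj⟩
  refine ⟨σ, hσ, ?_⟩
  rwa [show σ 0 = 0 from hσx 0, show σ 1 = j from hσx 1, show σ 2 = k from hσx 2]

theorem exists_sign_eq_one_mul_sub_mul_ne_zero {Φ Ψ : Fin 5 → ℝ}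
    (hind : LinearIndependent ℝ ![Φ, Ψ]) :
    ∃ τ : Perm (Fin 5), Perm.sign τ = 1 ∧ Φ (τ 3) * Ψ (τ 4) - Φ (τ 4) * Ψ (τ 3) ≠ 0 := by
  obtain ⟨k, l, hkl⟩ : ∃ k l, Φ k * Ψ l - Φ l * Ψ k ≠ 0 := by
    by_contra! h
    obtain ⟨k, hk⟩ := Function.ne_iff.mp (hind.ne_zero 0)
    have := LinearIndependent.pair_iff.mp hind (Ψ k) (-Φ k) (by
      ext l
      simp only [Pi.add_apply, Pi.smul_apply, smul_eq_mul, Pi.zero_apply]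
      linear_combination h l k)
    exact hk (neg_eq_zero.mp this.2)
  have hne : k ≠ l := by rintro rfl; simp at hkl
  obtain ⟨τ, hτ, hτx⟩ := Perm.exists_sign_eq_one_forall_apply_eq (by simp)
    ⟨![3, 4], by decide⟩ ⟨![k, l], injective_pair_iff_ne.mpr hne⟩
  refine ⟨τ, hτ, ?_⟩
  rwa [show τ 3 = k from hτx 0, show τ 4 = l from hτx 1]

theorem stmt4 (q : Fin 5 → ℝ × ℝ) (hnc : ¬ Collinear ℝ (Set.range q))
    (Φ Ψ : Fin 5 → ℝ) (hind : LinearIndependent ℝ ![Φ, Ψ])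
    (hΦ1 : ∑ i, Φ i = 0) (hΦx : ∑ i, Φ i * (q i).1 = 0) (hΦy : ∑ i, Φ i * (q i).2 = 0)
    (hΨ1 : ∑ i, Ψ i = 0) (hΨx : ∑ i, Ψ i * (q i).1 = 0) (hΨy : ∑ i, Ψ i * (q i).2 = 0) :
    ∃ a : ℝ, a ≠ 0 ∧ ∀ σ : Equiv.Perm (Fin 5), σ.sign = 1 →
      wedge (q (σ 1) - q (σ 0)) (q (σ 2) - q (σ 0))
        = a * (Φ (σ 3) * Ψ (σ 4) - Φ (σ 4) * Ψ (σ 3)) := by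
  have hΦ := homCoords_mulVec_eq_zero hΦ1 hΦx hΦy
  have hΨ := homCoords_mulVec_eq_zero hΨ1 hΨx hΨy
  obtain ⟨σ₀, hσ₀, hΔ⟩ := exists_sign_eq_one_wedge_ne_zero hnc
  obtain ⟨τ, hτ, hM⟩ := exists_sign_eq_one_mul_sub_mul_ne_zero hind
  refine ⟨wedge (q (τ 1) - q (τ 0)) (q (τ 2) - q (τ 0)) /
    (Φ (τ 3) * Ψ (τ 4) - Φ (τ 4) * Ψ (τ 3)), div_ne_zero ?_ hM, fun σ hσ => ?_⟩
  · intro hΔτ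
    have h := wedge_mul_eq_wedge_mul_of_sign_eq_one hΦ hΨ hσ₀ hτ
    rw [hΔτ, zero_mul] at h
    exact mul_ne_zero hΔ hM h
  · rw [div_mul_eq_mul_div, eq_div_iff hM]
    exact wedge_mul_eq_wedge_mul_of_sign_eq_one hΦ hΨ hσ hτ
end

section
/- With the setup of the area-covector lemma, if additionally ℝ^5 carries the inner product ⟨v,w⟩ = Σ m_i v_i w_i with m_i > 0, and Φ, Ψ (identified with vectors via this inner product) are orthonormal, then the constant a satisfies a² = ‖U ∧ X ∧ Y‖² / (m_1 m_2 m_3 m_4 m_5), where ‖U ∧ X ∧ Y‖² is the Gram determinant of (U, X, Y) with respect to this inner product. -/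
open Finset

/-- Gram matrix of the three vectors `U = (1,…,1)`, `X`, `Y` with respect to the
mass inner product `⟨v,w⟩ = ∑ mᵢ vᵢ wᵢ`. -/
noncomputable def gramUXY (m x y : Fin 5 → ℝ) : Matrix (Fin 3) (Fin 3) ℝ :=
  Matrix.of fun i j =>
    ∑ k, m k * (![fun _ => (1 : ℝ), x, y] i k) * (![fun _ => (1 : ℝ), x, y] j k)

private def mkP (f g : Fin 5 → Fin 5) (h1 : ∀ x, g (f x) = x) (h2 : ∀ x, f (g x) = x) :
    Equiv.Perm (Fin 5) := ⟨f, g, h1, h2⟩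

theorem stmt5 (q : Fin 5 → ℝ × ℝ) (hnc : ¬ Collinear ℝ (Set.range q))
    (m : Fin 5 → ℝ) (hm : ∀ i, 0 < m i)
    (Φ Ψ : Fin 5 → ℝ)
    (hΦ1 : ∑ i, Φ i = 0) (hΦx : ∑ i, Φ i * (q i).1 = 0) (hΦy : ∑ i, Φ i * (q i).2 = 0)
    (hΨ1 : ∑ i, Ψ i = 0) (hΨx : ∑ i, Ψ i * (q i).1 = 0) (hΨy : ∑ i, Ψ i * (q i).2 = 0)
    (hΦn : ∑ i, Φ i ^ 2 / m i = 1) (hΨn : ∑ i, Ψ i ^ 2 / m i = 1)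
    (hΦΨ : ∑ i, Φ i * Ψ i / m i = 0)
    (a : ℝ)
    (ha : ∀ σ : Equiv.Perm (Fin 5), σ.sign = 1 →
      wedge (q (σ 1) - q (σ 0)) (q (σ 2) - q (σ 0))
        = a * (Φ (σ 3) * Ψ (σ 4) - Φ (σ 4) * Ψ (σ 3))) :
    a ^ 2 = (gramUXY m (fun k => (q k).1) (fun k => (q k).2)).det
      / (m 0 * m 1 * m 2 * m 3 * m 4) := by
  have hPR : (m 0 * m 1 * m 2 * m 3 * m 4) ≠ 0 :=
    mul_ne_zero (mul_ne_zero (mul_ne_zero (mul_ne_zero (hm 0).ne' (hm 1).ne') (hm 2).ne') (hm 3).ne') (hm 4).ne'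
  have h0 := (hm 0).ne'
  have h1 := (hm 1).ne'
  have h2 := (hm 2).ne'
  have h3 := (hm 3).ne'
  have h4 := (hm 4).ne'
  have hA : Φ 0 ^ 2 * (m 1 * m 2 * m 3 * m 4) + Φ 1 ^ 2 * (m 0 * m 2 * m 3 * m 4) + Φ 2 ^ 2 * (m 0 * m 1 * m 3 * m 4) + Φ 3 ^ 2 * (m 0 * m 1 * m 2 * m 4) + Φ 4 ^ 2 * (m 0 * m 1 * m 2 * m 3) = (m 0 * m 1 * m 2 * m 3 * m 4) := by
    rw [Fin.sum_univ_five] at hΦn; field_simp at hΦn; linear_combination hΦn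
  have hB : Ψ 0 ^ 2 * (m 1 * m 2 * m 3 * m 4) + Ψ 1 ^ 2 * (m 0 * m 2 * m 3 * m 4) + Ψ 2 ^ 2 * (m 0 * m 1 * m 3 * m 4) + Ψ 3 ^ 2 * (m 0 * m 1 * m 2 * m 4) + Ψ 4 ^ 2 * (m 0 * m 1 * m 2 * m 3) = (m 0 * m 1 * m 2 * m 3 * m 4) := by
    rw [Fin.sum_univ_five] at hΨn; field_simp at hΨn; linear_combination hΨn
  have hC : Φ 0 * Ψ 0 * (m 1 * m 2 * m 3 * m 4) + Φ 1 * Ψ 1 * (m 0 * m 2 * m 3 * m 4) + Φ 2 * Ψ 2 * (m 0 * m 1 * m 3 * m 4) + Φ 3 * Ψ 3 * (m 0 * m 1 * m 2 * m 4) + Φ 4 * Ψ 4 * (m 0 * m 1 * m 2 * m 3) = 0 := by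
    rw [Fin.sum_univ_five] at hΦΨ; field_simp at hΦΨ; linear_combination hΦΨ
  have e34 := ha (mkP ![0,1,2,3,4] ![0,1,2,3,4] (by decide) (by decide)) (by decide)
  simp only [mkP, wedge, Equiv.coe_fn_mk, Matrix.cons_val_zero, Matrix.cons_val_one,
    Matrix.head_cons, Matrix.cons_val_two, Matrix.tail_cons, Matrix.cons_val_three,
    Matrix.cons_val_four, Prod.fst_sub, Prod.snd_sub] at e34
  have e24 := ha (mkP ![0,3,1,2,4] ![0,2,3,1,4] (by decide) (by decide)) (by decide)
  simp only [mkP, wedge, Equiv.coe_fn_mk, Matrix.cons_val_zero, Matrix.cons_val_one,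
    Matrix.head_cons, Matrix.cons_val_two, Matrix.tail_cons, Matrix.cons_val_three,
    Matrix.cons_val_four, Prod.fst_sub, Prod.snd_sub] at e24
  have e23 := ha (mkP ![0,1,4,2,3] ![0,1,3,4,2] (by decide) (by decide)) (by decide)
  simp only [mkP, wedge, Equiv.coe_fn_mk, Matrix.cons_val_zero, Matrix.cons_val_one,
    Matrix.head_cons, Matrix.cons_val_two, Matrix.tail_cons, Matrix.cons_val_three,
    Matrix.cons_val_four, Prod.fst_sub, Prod.snd_sub] at e23
  have e14 := ha (mkP ![0,2,3,1,4] ![0,3,1,2,4] (by decide) (by decide)) (by decide)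
  simp only [mkP, wedge, Equiv.coe_fn_mk, Matrix.cons_val_zero, Matrix.cons_val_one,
    Matrix.head_cons, Matrix.cons_val_two, Matrix.tail_cons, Matrix.cons_val_three,
    Matrix.cons_val_four, Prod.fst_sub, Prod.snd_sub] at e14
  have e13 := ha (mkP ![0,4,2,1,3] ![0,3,2,4,1] (by decide) (by decide)) (by decide)
  simp only [mkP, wedge, Equiv.coe_fn_mk, Matrix.cons_val_zero, Matrix.cons_val_one,
    Matrix.head_cons, Matrix.cons_val_two, Matrix.tail_cons, Matrix.cons_val_three,
    Matrix.cons_val_four, Prod.fst_sub, Prod.snd_sub] at e13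
  have e12 := ha (mkP ![0,3,4,1,2] ![0,3,4,1,2] (by decide) (by decide)) (by decide)
  simp only [mkP, wedge, Equiv.coe_fn_mk, Matrix.cons_val_zero, Matrix.cons_val_one,
    Matrix.head_cons, Matrix.cons_val_two, Matrix.tail_cons, Matrix.cons_val_three,
    Matrix.cons_val_four, Prod.fst_sub, Prod.snd_sub] at e12
  have e04 := ha (mkP ![1,3,2,0,4] ![3,0,2,1,4] (by decide) (by decide)) (by decide)
  simp only [mkP, wedge, Equiv.coe_fn_mk, Matrix.cons_val_zero, Matrix.cons_val_one,
    Matrix.head_cons, Matrix.cons_val_two, Matrix.tail_cons, Matrix.cons_val_three,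
    Matrix.cons_val_four, Prod.fst_sub, Prod.snd_sub] at e04
  have e03 := ha (mkP ![1,2,4,0,3] ![3,0,1,4,2] (by decide) (by decide)) (by decide)
  simp only [mkP, wedge, Equiv.coe_fn_mk, Matrix.cons_val_zero, Matrix.cons_val_one,
    Matrix.head_cons, Matrix.cons_val_two, Matrix.tail_cons, Matrix.cons_val_three,
    Matrix.cons_val_four, Prod.fst_sub, Prod.snd_sub] at e03
  have e02 := ha (mkP ![1,4,3,0,2] ![3,0,4,2,1] (by decide) (by decide)) (by decide)
  simp only [mkP, wedge, Equiv.coe_fn_mk, Matrix.cons_val_zero, Matrix.cons_val_one,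
    Matrix.head_cons, Matrix.cons_val_two, Matrix.tail_cons, Matrix.cons_val_three,
    Matrix.cons_val_four, Prod.fst_sub, Prod.snd_sub] at e02
  have e01 := ha (mkP ![2,3,4,0,1] ![3,4,0,1,2] (by decide) (by decide)) (by decide)
  simp only [mkP, wedge, Equiv.coe_fn_mk, Matrix.cons_val_zero, Matrix.cons_val_one,
    Matrix.head_cons, Matrix.cons_val_two, Matrix.tail_cons, Matrix.cons_val_three,
    Matrix.cons_val_four, Prod.fst_sub, Prod.snd_sub] at e01
  rw [eq_div_iff hPR]
  apply mul_right_cancel₀ hPR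
  simp only [gramUXY, Matrix.det_fin_three, Matrix.of_apply, Fin.sum_univ_five,
    Matrix.cons_val_zero, Matrix.cons_val_one, Matrix.head_cons, Matrix.cons_val_two,
    Matrix.tail_cons]
  linear_combination (norm := ring1)
    (-((m 0 * m 1 * m 2 * m 3 * m 4) * (m 0 * m 1 * m 2) * ((((q 1).1 - (q 0).1) * ((q 2).2 - (q 0).2) - ((q 1).2 - (q 0).2) * ((q 2).1 - (q 0).1)) + a * (Φ 3 * Ψ 4 - Φ 4 * Ψ 3)))) * e34 +
    (-((m 0 * m 1 * m 2 * m 3 * m 4) * (m 0 * m 1 * m 3) * ((((q 3).1 - (q 0).1) * ((q 1).2 - (q 0).2) - ((q 3).2 - (q 0).2) * ((q 1).1 - (q 0).1)) + a * (Φ 2 * Ψ 4 - Φ 4 * Ψ 2)))) * e24 +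
    (-((m 0 * m 1 * m 2 * m 3 * m 4) * (m 0 * m 1 * m 4) * ((((q 1).1 - (q 0).1) * ((q 4).2 - (q 0).2) - ((q 1).2 - (q 0).2) * ((q 4).1 - (q 0).1)) + a * (Φ 2 * Ψ 3 - Φ 3 * Ψ 2)))) * e23 +
    (-((m 0 * m 1 * m 2 * m 3 * m 4) * (m 0 * m 2 * m 3) * ((((q 2).1 - (q 0).1) * ((q 3).2 - (q 0).2) - ((q 2).2 - (q 0).2) * ((q 3).1 - (q 0).1)) + a * (Φ 1 * Ψ 4 - Φ 4 * Ψ 1)))) * e14 +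
    (-((m 0 * m 1 * m 2 * m 3 * m 4) * (m 0 * m 2 * m 4) * ((((q 4).1 - (q 0).1) * ((q 2).2 - (q 0).2) - ((q 4).2 - (q 0).2) * ((q 2).1 - (q 0).1)) + a * (Φ 1 * Ψ 3 - Φ 3 * Ψ 1)))) * e13 +
    (-((m 0 * m 1 * m 2 * m 3 * m 4) * (m 0 * m 3 * m 4) * ((((q 3).1 - (q 0).1) * ((q 4).2 - (q 0).2) - ((q 3).2 - (q 0).2) * ((q 4).1 - (q 0).1)) + a * (Φ 1 * Ψ 2 - Φ 2 * Ψ 1)))) * e12 +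
    (-((m 0 * m 1 * m 2 * m 3 * m 4) * (m 1 * m 2 * m 3) * ((((q 3).1 - (q 1).1) * ((q 2).2 - (q 1).2) - ((q 3).2 - (q 1).2) * ((q 2).1 - (q 1).1)) + a * (Φ 0 * Ψ 4 - Φ 4 * Ψ 0)))) * e04 +
    (-((m 0 * m 1 * m 2 * m 3 * m 4) * (m 1 * m 2 * m 4) * ((((q 2).1 - (q 1).1) * ((q 4).2 - (q 1).2) - ((q 2).2 - (q 1).2) * ((q 4).1 - (q 1).1)) + a * (Φ 0 * Ψ 3 - Φ 3 * Ψ 0)))) * e03 +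
    (-((m 0 * m 1 * m 2 * m 3 * m 4) * (m 1 * m 3 * m 4) * ((((q 4).1 - (q 1).1) * ((q 3).2 - (q 1).2) - ((q 4).2 - (q 1).2) * ((q 3).1 - (q 1).1)) + a * (Φ 0 * Ψ 2 - Φ 2 * Ψ 0)))) * e02 +
    (-((m 0 * m 1 * m 2 * m 3 * m 4) * (m 2 * m 3 * m 4) * ((((q 3).1 - (q 2).1) * ((q 4).2 - (q 2).2) - ((q 3).2 - (q 2).2) * ((q 4).1 - (q 2).1)) + a * (Φ 0 * Ψ 1 - Φ 1 * Ψ 0)))) * e01 +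
    (- (a ^ 2 * (Ψ 0 ^ 2 * (m 1 * m 2 * m 3 * m 4) + Ψ 1 ^ 2 * (m 0 * m 2 * m 3 * m 4) + Ψ 2 ^ 2 * (m 0 * m 1 * m 3 * m 4) + Ψ 3 ^ 2 * (m 0 * m 1 * m 2 * m 4) + Ψ 4 ^ 2 * (m 0 * m 1 * m 2 * m 3)))) * hA +
    (- (a ^ 2 * (m 0 * m 1 * m 2 * m 3 * m 4))) * hB +
    (a ^ 2 * (Φ 0 * Ψ 0 * (m 1 * m 2 * m 3 * m 4) + Φ 1 * Ψ 1 * (m 0 * m 2 * m 3 * m 4) + Φ 2 * Ψ 2 * (m 0 * m 1 * m 3 * m 4) + Φ 3 * Ψ 3 * (m 0 * m 1 * m 2 * m 4) + Φ 4 * Ψ 4 * (m 0 * m 1 * m 2 * m 3))) * hC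
end

section
/- For a 5-body planar central configuration normalized with λ = M whose convex hull is a triangle q_1 q_2 q_3, at least two of the three inequalities Š_{12} < 0, Š_{23} < 0, Š_{13} < 0 hold, where Š_{ij} = r_{ij}^{−3} − 1. Equivalently, at least two of the three exterior sides have length greater than 1. -/
/-!
Subtracting the centre-of-mass identity `∑ⱼ mⱼ qⱼ = 0` from the equations
`-M qᵢ = ∑_{j ≠ i} mⱼ rᵢⱼ⁻³ (qⱼ - qᵢ)`, `M = ∑ⱼ mⱼ`, gives `∑_{j ≠ i} mⱼ Šᵢⱼ (qⱼ - qᵢ) = 0`.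
Suppose both sides of the triangle at a vertex `qₐ` have length at most `1`. Then the triangle
lies in the closed unit disk around `qₐ` and its interior in the open one, so every `Šₐⱼ` is
nonnegative and `Šₐ₃, Šₐ₄ > 0`. A linear functional separating `qₐ` from the opposite side is
strictly larger at `qₐ` than at every other body, so applied to the identity at `a` it gives a
negative left-hand side. Hence at every vertex one of the two adjacent sides is longer than `1`.
-/

open Finset

/-- The shifted quantity `Šᵢⱼ = rᵢⱼ⁻³ − 1`. -/
noncomputable def Scheck (q : Fin 5 → EuclideanSpace ℝ (Fin 2)) (i j : Fin 5) : ℝ :=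
  1 / dist (q i) (q j) ^ 3 - 1

section ShiftedDistance

variable {d : ℝ} {n : ℕ}

lemma one_div_pow_sub_one_nonneg (h0 : 0 < d) (h1 : d ≤ 1) : 0 ≤ 1 / d ^ n - 1 :=
  sub_nonneg.2 (one_le_one_div (pow_pos h0 n) (pow_le_one₀ h0.le h1))

lemma one_div_pow_sub_one_pos (h0 : 0 < d) (h1 : d < 1) (hn : n ≠ 0) : 0 < 1 / d ^ n - 1 :=
  sub_pos.2 (one_lt_one_div (pow_pos h0 n) (pow_lt_one₀ h0.le h1 hn))

lemma one_div_pow_sub_one_neg (h1 : 1 < d) (hn : n ≠ 0) : 1 / d ^ n - 1 < 0 :=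
  sub_neg.2 ((div_lt_one (by positivity)).2 (one_lt_pow₀ h1 hn))

end ShiftedDistance

theorem Finset.sum_smul_sub_ne_zero_of_forall_lt {ι V : Type*} [AddCommGroup V] [Module ℝ V]
    {s : Finset ι} {w : ι → ℝ} {x : ι → V} {p : V} (f : V →ₗ[ℝ] ℝ) (hw : ∀ j ∈ s, 0 ≤ w j)
    (hpos : ∃ j ∈ s, 0 < w j) (hf : ∀ j ∈ s, f (x j) < f p) : ∑ j ∈ s, w j • (x j - p) ≠ 0 := by
  intro hsum
  have hneg : ∑ j ∈ s, w j * (f (x j) - f p) < ∑ j ∈ s, (0 : ℝ) := by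
    refine sum_lt_sum (fun j hj => ?_) ?_
    · exact mul_nonpos_of_nonneg_of_nonpos (hw j hj) (sub_nonpos.2 (hf j hj).le)
    · obtain ⟨j, hj, hwj⟩ := hpos
      exact ⟨j, hj, mul_neg_of_pos_of_neg hwj (sub_neg.2 (hf j hj))⟩
  have hzero := congrArg f hsum
  simp only [map_sum, map_smul, map_sub, smul_eq_mul, map_zero] at hzero
  exact (hneg.trans_eq sum_const_zero).ne hzero

section Convexity

variable {E : Type*} [NormedAddCommGroup E] [NormedSpace ℝ E]

theorem interior_convexHull_subset_ball {s : Set E} {a : E} {r : ℝ} (hr : r ≠ 0)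
    (hs : s ⊆ Metric.closedBall a r) : interior (convexHull ℝ s) ⊆ Metric.ball a r := by
  rw [← interior_closedBall a hr]
  exact interior_mono (convexHull_min hs (convex_closedBall a r))

variable [FiniteDimensional ℝ E] (hE : 1 < Module.finrank ℝ E) {a b c : E}
include hE

theorem notMem_convexHull_pair_of_interior_convexHull_nonempty
    (h : (interior (convexHull ℝ {a, b, c})).Nonempty) : a ∉ convexHull ℝ {b, c} := by
  intro ha
  have hsub : convexHull ℝ {a, b, c} ⊆ convexHull ℝ {b, c} :=
    convexHull_min (Set.insert_subset ha (subset_convexHull ℝ _)) (convex_convexHull ℝ _)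
  have htop : affineSpan ℝ {b, c} = ⊤ :=
    interior_convexHull_nonempty_iff_affineSpan_eq_top.mp (h.mono (interior_mono hsub))
  have hrank := (collinear_pair ℝ b c).finrank_le_one
  rw [← direction_affineSpan, htop, AffineSubspace.direction_top, finrank_top] at hrank
  omega

theorem exists_strongDual_lt_of_interior_convexHull_nonempty
    (h : (interior (convexHull ℝ {a, b, c})).Nonempty) :
    ∃ f : StrongDual ℝ E, f b < f a ∧ f c < f a ∧
      ∀ x ∈ interior (convexHull ℝ {a, b, c}), f x < f a := by
  obtain ⟨f, u, hfu, hua⟩ := geometric_hahn_banach_closed_point (convex_convexHull ℝ _)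
    ((Set.toFinite _).isClosed_convexHull (𝕜 := ℝ))
    (notMem_convexHull_pair_of_interior_convexHull_nonempty hE h)
  have hfb : f b < f a := (hfu b (subset_convexHull ℝ _ (by simp))).trans hua
  have hfc : f c < f a := (hfu c (subset_convexHull ℝ _ (by simp))).trans hua
  have hT : convexHull ℝ {a, b, c} ⊆ f ⁻¹' Set.Iic (f a) := by
    refine convexHull_min ?_ ((convex_Iic (f a)).linear_preimage f.toLinearMap)
    rintro x (rfl | rfl | rfl)
    exacts [le_refl (f x), hfb.le, hfc.le]
  have hf0 : f ≠ 0 := by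
    rintro rfl
    simp at hfb
  have himage : f '' interior (convexHull ℝ {a, b, c}) ⊆ interior (Set.Iic (f a)) :=
    interior_maximal (Set.image_subset_iff.2 (interior_subset.trans hT))
      (f.isOpenMap_of_ne_zero hf0 _ isOpen_interior)
  rw [interior_Iic] at himage
  exact ⟨f, hfb, hfc, fun x hx => himage (Set.mem_image_of_mem f hx)⟩

end Convexity

section CentralConfiguration

variable {ι E : Type*} [Fintype ι] [DecidableEq ι] [NormedAddCommGroup E] [NormedSpace ℝ E]
  (q : ι → E) (m : ι → ℝ)

theorem sum_erase_shifted_smul_sub_eq_zero (hcom : ∑ i, m i • q i = 0) (i : ι)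
    (hcc : -((∑ j, m j) • q i)
      = ∑ j ∈ univ.erase i, (m j / dist (q i) (q j) ^ 3) • (q j - q i)) :
    ∑ j ∈ univ.erase i, (m j * (1 / dist (q i) (q j) ^ 3 - 1)) • (q j - q i) = 0 := by
  have hmass : ∑ j ∈ univ.erase i, m j • (q j - q i) = -((∑ j, m j) • q i) := by
    rw [sum_erase_eq_sub (mem_univ i), sub_self, smul_zero, sub_zero]
    simp only [smul_sub, sum_sub_distrib, hcom, ← sum_smul, zero_sub]
  simp only [mul_sub, mul_one_div, mul_one, sub_smul, sum_sub_distrib, ← hcc, hmass, sub_self]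

theorem one_lt_dist_or_one_lt_dist_of_interior [FiniteDimensional ℝ E]
    (hE : 1 < Module.finrank ℝ E) (hm : ∀ i, 0 < m i) (hcom : ∑ i, m i • q i = 0) (a b c : ι)
    (hcc : -((∑ j, m j) • q a)
      = ∑ j ∈ univ.erase a, (m j / dist (q a) (q j) ^ 3) • (q j - q a))
    (hint : ∀ j, j ≠ a → j ≠ b → j ≠ c → q j ∈ interior (convexHull ℝ {q a, q b, q c}))
    (hne : ∃ j, q j ∈ interior (convexHull ℝ {q a, q b, q c})) :
    1 < dist (q a) (q b) ∨ 1 < dist (q a) (q c) := by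
  by_contra! hshort
  obtain ⟨j₀, hj₀⟩ := hne
  obtain ⟨f, hfb, hfc, hf⟩ := exists_strongDual_lt_of_interior_convexHull_nonempty hE ⟨_, hj₀⟩
  have hball : interior (convexHull ℝ {q a, q b, q c}) ⊆ Metric.ball (q a) 1 := by
    refine interior_convexHull_subset_ball one_ne_zero ?_
    rintro x (rfl | rfl | rfl)
    · exact Metric.mem_closedBall_self zero_le_one
    · exact Metric.mem_closedBall'.2 hshort.1
    · exact Metric.mem_closedBall'.2 hshort.2
  have hbody : ∀ j ∈ univ.erase a, f (q j) < f (q a) ∧ dist (q a) (q j) ≤ 1 := by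
    intro j hj
    by_cases hjb : j = b
    · exact hjb ▸ ⟨hfb, hshort.1⟩
    by_cases hjc : j = c
    · exact hjc ▸ ⟨hfc, hshort.2⟩
    have hjT := hint j (ne_of_mem_erase hj) hjb hjc
    exact ⟨hf _ hjT, (Metric.mem_ball'.1 (hball hjT)).le⟩
  have hdist : ∀ j ∈ univ.erase a, 0 < dist (q a) (q j) := fun j hj =>
    dist_pos.2 fun h => (hbody j hj).1.ne (by rw [h])
  have hj₀a : j₀ ∈ univ.erase a :=
    mem_erase.2 ⟨fun h => (hf _ hj₀).ne (by rw [h]), mem_univ _⟩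
  refine Finset.sum_smul_sub_ne_zero_of_forall_lt (f : E →ₗ[ℝ] ℝ)
    (fun j hj => mul_nonneg (hm j).le (one_div_pow_sub_one_nonneg (hdist j hj) (hbody j hj).2))
    ⟨j₀, hj₀a, mul_pos (hm j₀) (one_div_pow_sub_one_pos (hdist j₀ hj₀a)
      (Metric.mem_ball'.1 (hball hj₀)) three_ne_zero)⟩
    (fun j hj => (hbody j hj).1) (sum_erase_shifted_smul_sub_eq_zero q m hcom a hcc)

end CentralConfiguration

theorem stmt15_general (q : Fin 5 → EuclideanSpace ℝ (Fin 2)) (m : Fin 5 → ℝ)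
    (hm : ∀ i, 0 < m i)
    (hcom : ∑ i, m i • q i = 0)
    (hcc : ∀ i, -((∑ j, m j) • q i)
      = ∑ j ∈ Finset.univ.erase i, (m j / dist (q i) (q j) ^ 3) • (q j - q i))
    (h4 : q 3 ∈ interior (convexHull ℝ {q 0, q 1, q 2}))
    (h5 : q 4 ∈ interior (convexHull ℝ {q 0, q 1, q 2})) :
    (Scheck q 0 1 < 0 ∧ Scheck q 1 2 < 0) ∨
    (Scheck q 0 1 < 0 ∧ Scheck q 0 2 < 0) ∨
    (Scheck q 1 2 < 0 ∧ Scheck q 0 2 < 0) := by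
  have hE : 1 < Module.finrank ℝ (EuclideanSpace ℝ (Fin 2)) := by
    rw [finrank_euclideanSpace_fin]; norm_num
  have hint : ∀ j : Fin 5, j ≠ 0 → j ≠ 1 → j ≠ 2 →
      q j ∈ interior (convexHull ℝ {q 0, q 1, q 2}) := by
    intro j
    fin_cases j <;> simp [h4, h5]
  have hT₁ : ({q 1, q 0, q 2} : Set _) = {q 0, q 1, q 2} := Set.insert_comm _ _ _
  have hT₂ : ({q 2, q 0, q 1} : Set _) = {q 0, q 1, q 2} := by
    rw [Set.insert_comm, Set.pair_comm]
  have h₀ := one_lt_dist_or_one_lt_dist_of_interior q m hE hm hcom 0 1 2 (hcc 0) hint ⟨3, h4⟩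
  have h₁ := one_lt_dist_or_one_lt_dist_of_interior q m hE hm hcom 1 0 2 (hcc 1)
    (hT₁ ▸ fun j h₁ h₀ h₂ => hint j h₀ h₁ h₂) ⟨3, hT₁ ▸ h4⟩
  have h₂ := one_lt_dist_or_one_lt_dist_of_interior q m hE hm hcom 2 0 1 (hcc 2)
    (hT₂ ▸ fun j h₂ h₀ h₁ => hint j h₀ h₁ h₂) ⟨3, hT₂ ▸ h4⟩
  have hlong : ∀ i j, 1 < dist (q i) (q j) → Scheck q i j < 0 := fun _ _ h =>
    one_div_pow_sub_one_neg h three_ne_zero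
  rw [dist_comm (q 1) (q 0)] at h₁
  rw [dist_comm (q 2) (q 0), dist_comm (q 2) (q 1)] at h₂
  have := hlong 0 1; have := hlong 1 2; have := hlong 0 2
  tauto

/-- For a normalized (`λ = M`) 5-body planar central configuration whose convex
hull is the triangle `q 0 q 1 q 2` (with `q 3`, `q 4` interior), at least two of the
three exterior sides are "long": at least two of `Š₀₁ < 0`, `Š₁₂ < 0`, `Š₀₂ < 0`. -/
theorem stmt15 (q : Fin 5 → EuclideanSpace ℝ (Fin 2)) (m : Fin 5 → ℝ)
    (hm : ∀ i, 0 < m i) (hq : ∀ i j, i ≠ j → q i ≠ q j)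
    (hcom : ∑ i, m i • q i = 0)
    (hcc : ∀ i, -((∑ j, m j) • q i)
      = ∑ j ∈ Finset.univ.erase i, (m j / dist (q i) (q j) ^ 3) • (q j - q i))
    (h4 : q 3 ∈ interior (convexHull ℝ {q 0, q 1, q 2}))
    (h5 : q 4 ∈ interior (convexHull ℝ {q 0, q 1, q 2})) :
    (Scheck q 0 1 < 0 ∧ Scheck q 1 2 < 0) ∨
    (Scheck q 0 1 < 0 ∧ Scheck q 0 2 < 0) ∨
    (Scheck q 1 2 < 0 ∧ Scheck q 0 2 < 0) :=
  stmt15_general q m hm hcom hcc h4 h5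
end
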